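/- Let d ≥ 4 and let h : (0,∞) → ℂ be defined by h(x) = 2π c_d x^{1−d/2} ∫_1^∞ r^{−d/2−1} J_{d/2−1}(2πrx) dr, where c_d = Γ((d+1)/2)/π^{(d+1)/2}. Then h is differentiable on (0,∞) and for all x > 0 one has h′(x) = −c_d (2π)^{d/2+1} ∫_{2πx}^∞ r^{−d/2} J_{d/2}(r) dr. -/

import Mathlib

noncomputable section
open MeasureTheory Real Filter Metric
open scoped ENNReal NNReal FourierTransform SchwartzMap

/-- The constant `c_d = Γ((d+1)/2)/π^((d+1)/2)`. -/
def rieszConst (d : ℕ) : ℝ := Real.Gamma (((d : ℝ) + 1) / 2) / Real.pi ^ (((d : ℝ) + 1) / 2)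

/-- The Bessel function of the first kind
`J_ν(t) = (t^ν/(2^ν Γ(ν+1/2) √π)) ∫_{−1}^{1} e^{its} (1−s²)^{ν−1/2} ds`. -/
def besselJ (ν : ℝ) (t : ℝ) : ℂ :=
  ((t ^ ν / (2 ^ ν * Real.Gamma (ν + 1/2) * Real.sqrt π) : ℝ) : ℂ) *
    ∫ s in (-1 : ℝ)..1, Complex.exp (Complex.I * t * s) * (((1 - s ^ 2) ^ (ν - 1/2) : ℝ) : ℂ)

/-- The function `h(x) = 2π c_d x^{1−d/2} ∫_1^∞ r^{−d/2−1} J_{d/2−1}(2πrx) dr`. -/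
def hFun (d : ℕ) (x : ℝ) : ℂ :=
  ((2 * π * rieszConst d * x ^ (1 - (d : ℝ) / 2) : ℝ) : ℂ) *
    ∫ r in Set.Ioi (1 : ℝ), ((r ^ (-(d : ℝ) / 2 - 1) : ℝ) : ℂ) *
      besselJ ((d : ℝ) / 2 - 1) (2 * π * r * x)


namespace BJaux
open Set intervalIntegral

/-- weight -/
def w (μ s : ℝ) : ℝ := (1 - s ^ 2) ^ μ

/-- oscillating factor -/
def eI (t s : ℝ) : ℂ := Complex.exp (Complex.I * t * s)

/-- the basic integral -/
def A (μ t : ℝ) : ℂ := ∫ s in (-1:ℝ)..1, eI t s * ((w μ s : ℝ) : ℂ)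

/-- the s-weighted integral -/
def B (μ t : ℝ) : ℂ := ∫ s in (-1:ℝ)..1, ((s:ℝ):ℂ) * eI t s * ((w μ s : ℝ) : ℂ)

def aN (ν : ℝ) : ℝ := 2 ^ ν * Real.Gamma (ν + 1/2) * Real.sqrt π

lemma measurable_w (μ : ℝ) : Measurable (w μ) := by
  unfold w; fun_prop

lemma norm_eI (t s : ℝ) : ‖eI t s‖ = 1 := by
  unfold eI
  rw [Complex.norm_exp]
  simp [Complex.mul_re]

lemma continuous_eI_t (s : ℝ) : Continuous fun t => eI t s := by
  unfold eI; fun_prop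

lemma continuous_eI_s (t : ℝ) : Continuous fun s => eI t s := by
  unfold eI; fun_prop

lemma w_nonneg (μ : ℝ) {s : ℝ} (hs : s ∈ Set.Icc (-1:ℝ) 1) : 0 ≤ w μ s := by
  apply Real.rpow_nonneg
  nlinarith [hs.1, hs.2]

lemma w_one (μ : ℝ) (hμ : μ ≠ 0) : w μ 1 = 0 := by
  simp [w, Real.zero_rpow hμ]

lemma w_neg_one (μ : ℝ) (hμ : μ ≠ 0) : w μ (-1) = 0 := by
  simp [w, Real.zero_rpow hμ]

lemma intervalIntegrable_w {μ : ℝ} (hμ : -1 < μ) :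
    IntervalIntegrable (w μ) volume (-1) 1 := by
  rcases le_or_gt 0 μ with h0 | h0
  · -- bounded by 1
    rw [intervalIntegrable_iff_integrableOn_Ioc_of_le (by norm_num)]
    apply Integrable.mono' (g := fun _ => (1:ℝ)) (integrable_const 1)
      ((measurable_w μ).aestronglyMeasurable.restrict)
    rw [ae_restrict_iff' measurableSet_Ioc]
    filter_upwards with s hs
    have h1 : 0 ≤ 1 - s ^ 2 := by nlinarith [hs.1, hs.2]
    have h2 : 1 - s ^ 2 ≤ 1 := by nlinarith [hs.1, hs.2]
    show ‖(1 - s^2) ^ μ‖ ≤ 1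
    rw [Real.norm_of_nonneg (Real.rpow_nonneg h1 _)]
    exact Real.rpow_le_one h1 h2 h0
  · -- singular case : dominate by (1+s)^μ + (1-s)^μ
    have hg1 : IntervalIntegrable (fun s : ℝ => (1 + s) ^ μ) volume (-1) 1 := by
      have := (intervalIntegral.intervalIntegrable_rpow' (a := 0) (b := 2) hμ).comp_add_right 1
      simpa [add_comm, show (2:ℝ) - 1 = 1 by norm_num] using this
    have hg2 : IntervalIntegrable (fun s : ℝ => (1 - s) ^ μ) volume (-1) 1 := by
      have h := ((intervalIntegral.intervalIntegrable_rpow' (a := 0) (b := 2) hμ).comp_sub_left 1).symm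
      simpa [show (1:ℝ) - 2 = -1 by norm_num] using h
    rw [intervalIntegrable_iff_integrableOn_Ioc_of_le (by norm_num)]
    apply Integrable.mono' (g := fun s => (1 + s) ^ μ + (1 - s) ^ μ)
    · have := (hg1.add hg2)
      rw [intervalIntegrable_iff_integrableOn_Ioc_of_le (by norm_num)] at this
      exact this
    · exact (measurable_w μ).aestronglyMeasurable.restrict
    · rw [ae_restrict_iff' measurableSet_Ioc]
      filter_upwards with s hs
      have hge : 0 ≤ 1 - s ^ 2 := by nlinarith [hs.1, hs.2]
      show ‖(1 - s^2) ^ μ‖ ≤ _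
      rw [Real.norm_of_nonneg (Real.rpow_nonneg hge _)]
      have hp1 : (0:ℝ) ≤ (1 + s) ^ μ := Real.rpow_nonneg (by linarith [hs.1]) _
      have hp2 : (0:ℝ) ≤ (1 - s) ^ μ := Real.rpow_nonneg (by linarith [hs.2]) _
      rcases eq_or_lt_of_le hs.2 with rfl | hlt
      · rw [show ((1:ℝ) - 1^2) ^ μ = 0 by norm_num [Real.zero_rpow (show μ ≠ 0 by linarith)]]
        positivity
      · have hpos : 0 < 1 - s ^ 2 := by nlinarith [hs.1, hlt]
        rcases le_or_gt s 0 with hsle | hsgt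
        · have : (1 - s^2 : ℝ) ^ μ ≤ (1 + s) ^ μ := by
            apply Real.rpow_le_rpow_of_nonpos (by linarith [hs.1]) (by nlinarith) h0.le
          linarith
        · have : (1 - s^2 : ℝ) ^ μ ≤ (1 - s) ^ μ := by
            apply Real.rpow_le_rpow_of_nonpos (by linarith) (by nlinarith) h0.le
          linarith

/-- integrability of a bounded complex multiplier times `w μ`. -/
lemma intervalIntegrable_mul_w {μ : ℝ} (hμ : -1 < μ) {f : ℝ → ℂ} {C : ℝ}
    (hf : AEStronglyMeasurable f (volume.restrict (Set.Ioc (-1:ℝ) 1)))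
    (hb : ∀ s ∈ Set.Ioc (-1:ℝ) 1, ‖f s‖ ≤ C) :
    IntervalIntegrable (fun s => f s * ((w μ s : ℝ):ℂ)) volume (-1) 1 := by
  rw [intervalIntegrable_iff_integrableOn_Ioc_of_le (by norm_num)]
  apply Integrable.mono' (g := fun s => C * w μ s)
  · have := (intervalIntegrable_w hμ).const_mul C
    rw [intervalIntegrable_iff_integrableOn_Ioc_of_le (by norm_num)] at this
    exact this
  · exact hf.mul (Complex.measurable_ofReal.comp (measurable_w μ)).aestronglyMeasurable.restrict
  · rw [ae_restrict_iff' measurableSet_Ioc]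
    filter_upwards with s hs
    have hw : 0 ≤ w μ s := w_nonneg μ (Set.Ioc_subset_Icc_self hs)
    rw [norm_mul, Complex.norm_real, Real.norm_of_nonneg hw]
    exact mul_le_mul_of_nonneg_right (hb s hs) hw
/-- derivative of `w p` everywhere, valid for `1 ≤ p` (including endpoints). -/
lemma hasDerivAt_w_global {p : ℝ} (hp : 1 ≤ p) (s : ℝ) :
    HasDerivAt (w p) (p * w (p-1) s * (-2 * s)) s := by
  have h1 : HasDerivAt (fun s : ℝ => 1 - s ^ 2) (-2 * s) s := by
    simpa using ((hasDerivAt_pow 2 s).const_sub 1)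
  have h2 := (Real.hasDerivAt_rpow_const (x := 1 - s ^ 2) (p := p) (Or.inr hp)).comp s h1
  have h3 : HasDerivAt (fun s : ℝ => (1 - s ^ 2) ^ p) (p * w (p-1) s * (-2 * s)) s := by
    simpa [w, Function.comp_def, mul_comm, mul_assoc, mul_left_comm] using h2
  exact h3

/-- derivative of `w p` at interior points, any exponent. -/
lemma hasDerivAt_w_interior (p : ℝ) {s : ℝ} (hs : s ∈ Set.Ioo (-1:ℝ) 1) :
    HasDerivAt (w p) (p * w (p-1) s * (-2 * s)) s := by
  have hne : (1 - s ^ 2 : ℝ) ≠ 0 := by nlinarith [hs.1, hs.2]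
  have h1 : HasDerivAt (fun s : ℝ => 1 - s ^ 2) (-2 * s) s := by
    simpa using ((hasDerivAt_pow 2 s).const_sub 1)
  have h2 := (Real.hasDerivAt_rpow_const (x := 1 - s ^ 2) (p := p) (Or.inl hne)).comp s h1
  have h3 : HasDerivAt (fun s : ℝ => (1 - s ^ 2) ^ p) (p * w (p-1) s * (-2 * s)) s := by
    simpa [w, Function.comp_def, mul_comm, mul_assoc, mul_left_comm] using h2
  exact h3

lemma continuous_w {p : ℝ} (hp : 0 ≤ p) : Continuous (w p) := by
  rw [continuous_iff_continuousAt]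
  intro s
  exact (Real.continuousAt_rpow_const _ _ (Or.inr hp)).comp
    ((continuous_const.sub (continuous_pow 2)).continuousAt)

/-- First IBP identity : `(2ν+1) B_{ν-1/2}(t) = i t A_{ν+1/2}(t)`. -/
lemma ibp1 {ν : ℝ} (hν : 1 ≤ ν) (t : ℝ) :
    ((2*ν+1 : ℝ) : ℂ) * B (ν - 1/2) t = Complex.I * t * A (ν + 1/2) t := by
  set F : ℝ → ℂ := fun s => eI t s * ((w (ν + 1/2) s : ℝ) : ℂ) with hF
  set F' : ℝ → ℂ := fun s =>
      Complex.I * t * (eI t s * ((w (ν + 1/2) s : ℝ) : ℂ))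
      - ((2*ν+1 : ℝ) : ℂ) * (((s:ℝ):ℂ) * eI t s * ((w (ν - 1/2) s : ℝ) : ℂ)) with hF'
  have hderiv : ∀ s ∈ Set.uIcc (-1:ℝ) 1, HasDerivAt F (F' s) s := by
    intro s _
    have he : HasDerivAt (fun s : ℝ => eI t s) (Complex.I * t * eI t s) s := by
      have hlin : HasDerivAt (fun s : ℝ => Complex.I * t * s) (Complex.I * t) s := by
        simpa using (Complex.ofRealCLM.hasDerivAt (x := s)).const_mul (Complex.I * t)
      simpa [eI, mul_comm] using hlin.cexp
    have hw : HasDerivAt (fun s => ((w (ν + 1/2) s : ℝ) : ℂ))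
        ((((ν + 1/2) * w (ν - 1/2) s * (-2 * s) : ℝ)) : ℂ) s := by
      have := hasDerivAt_w_global (p := ν + 1/2) (by linarith) s
      have h2 : (ν + 1/2 - 1 : ℝ) = ν - 1/2 := by ring
      rw [h2] at this
      exact this.ofReal_comp
    have := he.mul hw
    refine this.congr_deriv ?_
    simp only [hF']
    push_cast
    ring
  have hint : IntervalIntegrable F' volume (-1) 1 := by
    apply IntervalIntegrable.sub
    · apply IntervalIntegrable.const_mul
      apply intervalIntegrable_mul_w (by linarith : (-1:ℝ) < ν + 1/2)
        (f := fun s => eI t s) (C := 1)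
      · exact (continuous_eI_s t).aestronglyMeasurable.restrict
      · intro s _; rw [norm_eI]
    · apply IntervalIntegrable.const_mul
      apply intervalIntegrable_mul_w (by linarith : (-1:ℝ) < ν - 1/2)
        (f := fun s => ((s:ℝ):ℂ) * eI t s) (C := 1)
      · exact ((Complex.continuous_ofReal.mul (continuous_eI_s t))).aestronglyMeasurable.restrict
      · intro s hs
        rw [norm_mul, norm_eI, mul_one, Complex.norm_real, Real.norm_eq_abs, abs_le]
        exact ⟨by linarith [hs.1], hs.2⟩
  have hFTC := intervalIntegral.integral_eq_sub_of_hasDerivAt hderiv hint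
  have hend : F 1 - F (-1) = 0 := by
    have h0 : (ν + 1/2 : ℝ) ≠ 0 := by positivity
    simp only [hF]
    rw [w_one _ h0, w_neg_one _ h0]
    simp
  rw [hend] at hFTC
  have hsplit : ∫ s in (-1:ℝ)..1, F' s
      = Complex.I * t * A (ν + 1/2) t - ((2*ν+1 : ℝ):ℂ) * B (ν - 1/2) t := by
    rw [hF']
    rw [intervalIntegral.integral_sub]
    · unfold A B
      rw [intervalIntegral.integral_const_mul, intervalIntegral.integral_const_mul]
    · apply IntervalIntegrable.const_mul
      apply intervalIntegrable_mul_w (by linarith : (-1:ℝ) < ν + 1/2)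
        (f := fun s => eI t s) (C := 1)
      · exact (continuous_eI_s t).aestronglyMeasurable.restrict
      · intro s _; rw [norm_eI]
    · apply IntervalIntegrable.const_mul
      apply intervalIntegrable_mul_w (by linarith : (-1:ℝ) < ν - 1/2)
        (f := fun s => ((s:ℝ):ℂ) * eI t s) (C := 1)
      · exact ((Complex.continuous_ofReal.mul (continuous_eI_s t))).aestronglyMeasurable.restrict
      · intro s hs
        rw [norm_mul, norm_eI, mul_one, Complex.norm_real, Real.norm_eq_abs, abs_le]
        exact ⟨by linarith [hs.1], hs.2⟩
  rw [hsplit] at hFTC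
  linear_combination -hFTC
/-- integrability of `s^2`-weighted singular `w`. -/
lemma intervalIntegrable_sq_mul_w {μ : ℝ} (hμ : -1 < μ) (t : ℝ) :
    IntervalIntegrable (fun s => ((s:ℝ):ℂ)^2 * eI t s * ((w μ s : ℝ):ℂ)) volume (-1) 1 := by
  apply intervalIntegrable_mul_w hμ (f := fun s => ((s:ℝ):ℂ)^2 * eI t s) (C := 1)
  · exact (((Complex.continuous_ofReal.pow 2).mul (continuous_eI_s t))).aestronglyMeasurable.restrict
  · intro s hs
    rw [norm_mul, norm_eI, mul_one, norm_pow, Complex.norm_real, Real.norm_eq_abs]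
    have : |s| ≤ 1 := abs_le.2 ⟨by linarith [hs.1], hs.2⟩
    nlinarith [abs_nonneg s]

/-- Second (open-interval) IBP identity:
`(2ν-1) ∫ s² e^{its} w_{ν-3/2} = A_{ν-1/2}(t) + i t B_{ν-1/2}(t)`. -/
lemma ibp2 {ν : ℝ} (hν : 1 ≤ ν) (t : ℝ) :
    ((2*ν-1 : ℝ) : ℂ) * ∫ s in (-1:ℝ)..1, ((s:ℝ):ℂ)^2 * eI t s * ((w (ν - 3/2) s : ℝ):ℂ)
      = A (ν - 1/2) t + Complex.I * t * B (ν - 1/2) t := by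
  set F : ℝ → ℂ := fun s => ((s:ℝ):ℂ) * eI t s * ((w (ν - 1/2) s : ℝ) : ℂ) with hFdef
  set F' : ℝ → ℂ := fun s =>
      eI t s * ((w (ν - 1/2) s : ℝ):ℂ)
      + Complex.I * t * (((s:ℝ):ℂ) * eI t s * ((w (ν - 1/2) s : ℝ):ℂ))
      - ((2*ν-1 : ℝ):ℂ) * (((s:ℝ):ℂ)^2 * eI t s * ((w (ν - 3/2) s : ℝ):ℂ)) with hF'def
  have hcont : ContinuousOn F (Set.Icc (-1:ℝ) 1) :=
    ((Complex.continuous_ofReal.mul (continuous_eI_s t)).mul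
      (Complex.continuous_ofReal.comp (continuous_w (by linarith : (0:ℝ) ≤ ν - 1/2)))).continuousOn
  have hderiv : ∀ s ∈ Set.Ioo (-1:ℝ) 1, HasDerivWithinAt F (F' s) (Set.Ioi s) s := by
    intro s hs
    apply HasDerivAt.hasDerivWithinAt
    have he : HasDerivAt (fun s : ℝ => eI t s) (Complex.I * t * eI t s) s := by
      have hlin : HasDerivAt (fun s : ℝ => Complex.I * t * s) (Complex.I * t) s := by
        simpa using (Complex.ofRealCLM.hasDerivAt (x := s)).const_mul (Complex.I * t)
      simpa [eI, mul_comm] using hlin.cexp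
    have hs' : HasDerivAt (fun s : ℝ => ((s:ℝ):ℂ)) 1 s := by
      simpa using (hasDerivAt_id s).ofReal_comp
    have hw : HasDerivAt (fun s => ((w (ν - 1/2) s : ℝ) : ℂ))
        ((((ν - 1/2) * w (ν - 3/2) s * (-2 * s) : ℝ)) : ℂ) s := by
      have := hasDerivAt_w_interior (p := ν - 1/2) hs
      have h2 : (ν - 1/2 - 1 : ℝ) = ν - 3/2 := by ring
      rw [h2] at this
      exact this.ofReal_comp
    have := (hs'.mul he).mul hw
    refine this.congr_deriv ?_
    simp only [hF'def, Pi.mul_apply]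
    push_cast
    ring
  have hint : IntervalIntegrable F' volume (-1) 1 := by
    apply IntervalIntegrable.sub
    apply IntervalIntegrable.add
    · apply intervalIntegrable_mul_w (by linarith : (-1:ℝ) < ν - 1/2)
        (f := fun s => eI t s) (C := 1)
      · exact (continuous_eI_s t).aestronglyMeasurable.restrict
      · intro s _; rw [norm_eI]
    · apply IntervalIntegrable.const_mul
      apply intervalIntegrable_mul_w (by linarith : (-1:ℝ) < ν - 1/2)
        (f := fun s => ((s:ℝ):ℂ) * eI t s) (C := 1)
      · exact ((Complex.continuous_ofReal.mul (continuous_eI_s t))).aestronglyMeasurable.restrict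
      · intro s hs
        rw [norm_mul, norm_eI, mul_one, Complex.norm_real, Real.norm_eq_abs, abs_le]
        exact ⟨by linarith [hs.1], hs.2⟩
    · exact (intervalIntegrable_sq_mul_w (by linarith : (-1:ℝ) < ν - 3/2) t).const_mul _
  have hFTC := intervalIntegral.integral_eq_sub_of_hasDeriv_right_of_le
    (by norm_num : (-1:ℝ) ≤ 1) hcont hderiv hint
  have hend : F 1 - F (-1) = 0 := by
    have h0 : (ν - 1/2 : ℝ) ≠ 0 := by intro h; linarith [h]
    simp only [hFdef]
    rw [w_one _ h0, w_neg_one _ h0]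
    simp
  rw [hend] at hFTC
  have hsplit : ∫ s in (-1:ℝ)..1, F' s
      = (A (ν - 1/2) t + Complex.I * t * B (ν - 1/2) t)
        - ((2*ν-1 : ℝ):ℂ) * ∫ s in (-1:ℝ)..1, ((s:ℝ):ℂ)^2 * eI t s * ((w (ν - 3/2) s : ℝ):ℂ) := by
    rw [hF'def]
    have i1 : IntervalIntegrable (fun s => eI t s * ((w (ν - 1/2) s : ℝ):ℂ)) volume (-1) 1 := by
      apply intervalIntegrable_mul_w (by linarith : (-1:ℝ) < ν - 1/2)
        (f := fun s => eI t s) (C := 1)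
      · exact (continuous_eI_s t).aestronglyMeasurable.restrict
      · intro s _; rw [norm_eI]
    have i2 : IntervalIntegrable
        (fun s => Complex.I * t * (((s:ℝ):ℂ) * eI t s * ((w (ν - 1/2) s : ℝ):ℂ))) volume (-1) 1 := by
      apply IntervalIntegrable.const_mul
      apply intervalIntegrable_mul_w (by linarith : (-1:ℝ) < ν - 1/2)
        (f := fun s => ((s:ℝ):ℂ) * eI t s) (C := 1)
      · exact ((Complex.continuous_ofReal.mul (continuous_eI_s t))).aestronglyMeasurable.restrict
      · intro s hs
        rw [norm_mul, norm_eI, mul_one, Complex.norm_real, Real.norm_eq_abs, abs_le]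
        exact ⟨by linarith [hs.1], hs.2⟩
    rw [intervalIntegral.integral_sub (i1.add i2)
      ((intervalIntegrable_sq_mul_w (by linarith : (-1:ℝ) < ν - 3/2) t).const_mul _),
      intervalIntegral.integral_add i1 i2, intervalIntegral.integral_const_mul,
      intervalIntegral.integral_const_mul]
    rfl
  rw [hsplit] at hFTC
  linear_combination -hFTC

/-- split `w (ν-3/2) = w (ν-1/2) + s² w (ν-3/2)` on `[-1,1]`. -/
lemma A_split {ν : ℝ} (hν : 1 ≤ ν) (t : ℝ) :
    A (ν - 3/2) t = A (ν - 1/2) t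
      + ∫ s in (-1:ℝ)..1, ((s:ℝ):ℂ)^2 * eI t s * ((w (ν - 3/2) s : ℝ):ℂ) := by
  have i1 : IntervalIntegrable (fun s => eI t s * ((w (ν - 1/2) s : ℝ):ℂ)) volume (-1) 1 := by
    apply intervalIntegrable_mul_w (by linarith : (-1:ℝ) < ν - 1/2)
      (f := fun s => eI t s) (C := 1)
    · exact (continuous_eI_s t).aestronglyMeasurable.restrict
    · intro s _; rw [norm_eI]
  have i2 := intervalIntegrable_sq_mul_w (by linarith : (-1:ℝ) < ν - 3/2) t
  unfold A
  rw [← intervalIntegral.integral_add i1 i2]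
  apply intervalIntegral.integral_congr
  intro s hs
  rw [Set.uIcc_of_le (by norm_num : (-1:ℝ) ≤ 1)] at hs
  have hkey : w (ν - 3/2) s = w (ν - 1/2) s + s^2 * w (ν - 3/2) s := by
    rcases eq_or_lt_of_le hs.2 with rfl | h2
    · have h0 : (ν - 1/2 : ℝ) ≠ 0 := by intro h; linarith
      have h0' : (ν - 3/2 : ℝ) + 1 = ν - 1/2 := by ring
      rw [w_one _ h0]
      unfold w
      norm_num
    rcases eq_or_lt_of_le hs.1 with h1 | h1
    · have h0 : (ν - 1/2 : ℝ) ≠ 0 := by intro h; linarith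
      rw [← h1, w_neg_one _ h0]
      unfold w
      norm_num
    · have hpos : (0:ℝ) < 1 - s ^ 2 := by nlinarith
      unfold w
      have he : (ν - 1/2 : ℝ) = ν - 3/2 + 1 := by ring
      rw [he, Real.rpow_add_one (ne_of_gt hpos)]
      ring
  calc eI t s * ((w (ν - 3/2) s : ℝ):ℂ)
      = eI t s * ((w (ν - 1/2) s + s^2 * w (ν - 3/2) s : ℝ):ℂ) := by rw [← hkey]
  _ = _ := by push_cast; ring

/-- The recurrence at the level of `A`:
`(2ν-1)(2ν+1) A_{ν-3/2} = 2ν(2ν+1) A_{ν-1/2} - t² A_{ν+1/2}`. -/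
lemma A_rec {ν : ℝ} (hν : 1 ≤ ν) (t : ℝ) :
    ((2*ν-1 : ℝ):ℂ) * ((2*ν+1 : ℝ):ℂ) * A (ν - 3/2) t
      = ((2*ν : ℝ):ℂ) * ((2*ν+1 : ℝ):ℂ) * A (ν - 1/2) t - (t:ℂ)^2 * A (ν + 1/2) t := by
  have h1 := ibp1 hν t
  have h2 := ibp2 hν t
  have h3 := A_split hν t
  have : ((2*ν-1 : ℝ):ℂ) * A (ν - 3/2) t
      = ((2*ν-1 : ℝ):ℂ) * A (ν - 1/2) t + (A (ν - 1/2) t + Complex.I * t * B (ν - 1/2) t) := by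
    rw [h3]; rw [mul_add, h2]
  have hI2 : (Complex.I)^2 = -1 := Complex.I_sq
  calc ((2*ν-1 : ℝ):ℂ) * ((2*ν+1 : ℝ):ℂ) * A (ν - 3/2) t
      = ((2*ν+1 : ℝ):ℂ) * (((2*ν-1 : ℝ):ℂ) * A (ν - 3/2) t) := by ring
  _ = ((2*ν+1 : ℝ):ℂ) * (((2*ν-1 : ℝ):ℂ) * A (ν - 1/2) t + A (ν - 1/2) t)
        + Complex.I * t * (((2*ν+1 : ℝ):ℂ) * B (ν - 1/2) t) := by rw [this]; ring
  _ = ((2*ν+1 : ℝ):ℂ) * (((2*ν-1 : ℝ):ℂ) * A (ν - 1/2) t + A (ν - 1/2) t)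
        + Complex.I * t * (Complex.I * t * A (ν + 1/2) t) := by rw [h1]
  _ = _ := by push_cast; linear_combination (((t:ℂ))^2 * A (ν + 1/2) t) * hI2
lemma hasDerivAt_A {m : ℝ} (hm : -1 < m) (t₀ : ℝ) :
    HasDerivAt (fun t => A m t) (Complex.I * B m t₀) t₀ := by
  have h1 : ∀ᶠ x in nhds t₀, AEStronglyMeasurable (fun s => eI x s * ((w m s : ℝ):ℂ))
      (volume.restrict (Set.uIoc (-1:ℝ) 1)) := by
    filter_upwards with t
    exact ((continuous_eI_s t).aestronglyMeasurable.restrict.mul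
      ((Complex.measurable_ofReal.comp (measurable_w m)).aestronglyMeasurable.restrict))
  have h2 : IntervalIntegrable (fun s => eI t₀ s * ((w m s : ℝ):ℂ)) volume (-1) 1 := by
    apply intervalIntegrable_mul_w hm (f := fun s => eI t₀ s) (C := 1)
    · exact (continuous_eI_s t₀).aestronglyMeasurable.restrict
    · intro s _; rw [norm_eI]
  have h3 : AEStronglyMeasurable (fun s => Complex.I * ((s:ℝ):ℂ) * eI t₀ s * ((w m s : ℝ):ℂ))
      (volume.restrict (Set.uIoc (-1:ℝ) 1)) :=
    (((continuous_const.mul Complex.continuous_ofReal).mul (continuous_eI_s t₀)).aestronglyMeasurable.restrict.mul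
      ((Complex.measurable_ofReal.comp (measurable_w m)).aestronglyMeasurable.restrict))
  have h4 : ∀ᵐ s ∂volume, s ∈ Set.uIoc (-1:ℝ) 1 → ∀ x ∈ Metric.ball t₀ 1,
      ‖Complex.I * ((s:ℝ):ℂ) * eI x s * ((w m s : ℝ):ℂ)‖ ≤ w m s := by
    filter_upwards with s hs x _
    rw [Set.uIoc_of_le (by norm_num : (-1:ℝ) ≤ 1)] at hs
    have hw : 0 ≤ w m s := w_nonneg m (Set.Ioc_subset_Icc_self hs)
    simp only [norm_mul, Complex.norm_I, one_mul, norm_eI, mul_one, Complex.norm_real,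
      Real.norm_eq_abs]
    have habs : |s| ≤ 1 := abs_le.2 ⟨by linarith [hs.1], hs.2⟩
    rw [abs_of_nonneg hw]
    nlinarith [abs_nonneg s]
  have h5 : IntervalIntegrable (w m) volume (-1) 1 := intervalIntegrable_w hm
  have h6 : ∀ᵐ s ∂volume, s ∈ Set.uIoc (-1:ℝ) 1 → ∀ x ∈ Metric.ball t₀ 1,
      HasDerivAt (fun x => eI x s * ((w m s : ℝ):ℂ))
        (Complex.I * ((s:ℝ):ℂ) * eI x s * ((w m s : ℝ):ℂ)) x := by
    filter_upwards with s hs x _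
    have hlin : HasDerivAt (fun t : ℝ => Complex.I * t * s) (Complex.I * s) x := by
      have hC : HasDerivAt (fun z : ℂ => Complex.I * z * (s:ℂ)) (Complex.I * (s:ℂ)) ((x:ℝ):ℂ) := by
        simpa using ((hasDerivAt_id ((x:ℝ):ℂ)).const_mul Complex.I).mul_const ((s:ℝ):ℂ)
      exact hC.comp_ofReal
    have hd := hlin.cexp.mul_const ((w m s : ℝ):ℂ)
    have heq : Complex.I * ((s:ℝ):ℂ) * eI x s * ((w m s : ℝ):ℂ)
        = Complex.exp (Complex.I * x * s) * (Complex.I * s) * ((w m s:ℝ):ℂ) := by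
      unfold eI; ring
    rw [heq]
    exact hd
  have key := intervalIntegral.hasDerivAt_integral_of_dominated_loc_of_deriv_le
    (μ := volume) (F := fun (t : ℝ) s => eI t s * ((w m s : ℝ):ℂ))
    (F' := fun (t : ℝ) s => Complex.I * ((s:ℝ):ℂ) * eI t s * ((w m s : ℝ):ℂ))
    (x₀ := t₀) (a := -1) (b := 1) (bound := fun s => w m s) (s := Metric.ball t₀ 1)
    (Metric.ball_mem_nhds t₀ one_pos) h1 h2 h3 h4 h5 h6
  have h7 := key.2
  have hB : (∫ s in (-1:ℝ)..1, Complex.I * ((s:ℝ):ℂ) * eI t₀ s * ((w m s : ℝ):ℂ))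
      = Complex.I * B m t₀ := by
    unfold B
    rw [← intervalIntegral.integral_const_mul]
    apply intervalIntegral.integral_congr
    intro s _
    ring
  rw [hB] at h7
  exact h7

lemma continuous_A {m : ℝ} (hm : -1 < m) : Continuous (fun t => A m t) := by
  apply intervalIntegral.continuous_of_dominated_interval
    (bound := fun s => w m s)
  · intro t
    exact ((continuous_eI_s t).aestronglyMeasurable.restrict.mul
      ((Complex.measurable_ofReal.comp (measurable_w m)).aestronglyMeasurable.restrict))
  · intro t
    filter_upwards with s hs
    rw [Set.uIoc_of_le (by norm_num : (-1:ℝ) ≤ 1)] at hs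
    have hw : 0 ≤ w m s := w_nonneg m (Set.Ioc_subset_Icc_self hs)
    rw [norm_mul, norm_eI, one_mul, Complex.norm_real, Real.norm_of_nonneg hw]
  · exact intervalIntegrable_w hm
  · filter_upwards with s _
    exact (continuous_eI_t s).mul continuous_const

lemma norm_A_le {m : ℝ} (hm : -1 < m) (t : ℝ) :
    ‖A m t‖ ≤ ∫ s in (-1:ℝ)..1, w m s := by
  unfold A
  refine le_trans (intervalIntegral.norm_integral_le_integral_norm (by norm_num : (-1:ℝ) ≤ 1)) ?_
  apply le_of_eq
  apply intervalIntegral.integral_congr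
  intro s hs
  rw [Set.uIcc_of_le (by norm_num : (-1:ℝ) ≤ 1)] at hs
  have hw : 0 ≤ w m s := w_nonneg m hs
  simp only [norm_mul, norm_eI, one_mul, Complex.norm_real, Real.norm_of_nonneg hw]

lemma besselJ_eq (ν t : ℝ) : besselJ ν t = ((t ^ ν / aN ν : ℝ) : ℂ) * A (ν - 1/2) t := rfl

lemma aN_pos {ν : ℝ} (hν : 0 ≤ ν) : 0 < aN ν := by
  unfold aN
  have h1 : (0:ℝ) < 2 ^ ν := Real.rpow_pos_of_pos (by norm_num) ν
  have h2 : (0:ℝ) < Real.Gamma (ν + 1/2) := Real.Gamma_pos_of_pos (by linarith)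
  have h3 : (0:ℝ) < Real.sqrt π := Real.sqrt_pos.2 Real.pi_pos
  positivity

lemma aN_succ {ν : ℝ} (hν : 0 ≤ ν) : aN (ν + 1) = (2*ν+1) * aN ν := by
  unfold aN
  have h1 : (ν + 1 + 1/2 : ℝ) = (ν + 1/2) + 1 := by ring
  rw [h1, Real.Gamma_add_one (by positivity), Real.rpow_add_one (by norm_num : (2:ℝ) ≠ 0)]
  ring

/-- Derivative of the Bessel function: `J_ν'(t) = (ν/t) J_ν(t) - J_{ν+1}(t)` for `t > 0`. -/
lemma besselJ_hasDerivAt {ν : ℝ} (hν : 1 ≤ ν) {t : ℝ} (ht : 0 < t) :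
    HasDerivAt (besselJ ν)
      (((ν / t : ℝ):ℂ) * besselJ ν t - besselJ (ν+1) t) t := by
  have hν0 : (0:ℝ) ≤ ν := by linarith
  have hr : HasDerivAt (fun t : ℝ => t ^ ν / aN ν) (ν * t ^ (ν - 1) / aN ν) t :=
    (Real.hasDerivAt_rpow_const (p := ν) (Or.inl (ne_of_gt ht))).div_const _
  have hA := hasDerivAt_A (m := ν - 1/2) (by linarith) t
  have hprod := (hr.ofReal_comp).mul hA
  have hfun : (fun t => ((t ^ ν / aN ν : ℝ):ℂ) * A (ν - 1/2) t) = besselJ ν := by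
    funext u; rw [besselJ_eq]
  simp only [Pi.mul_def] at hprod
  rw [hfun] at hprod
  refine hprod.congr_deriv ?_
  -- identify the derivative
  have hB : Complex.I * B (ν - 1/2) t = -((t / (2*ν+1) : ℝ):ℂ) * A (ν + 1/2) t := by
    have h1 := ibp1 hν t
    have hne : ((2*ν+1 : ℝ):ℂ) ≠ 0 := by
      simp only [ne_eq, Complex.ofReal_eq_zero]
      intro h; nlinarith [h]
    set b := B (ν - 1/2) t with hbdef
    set a := A (ν + 1/2) t with hadef
    have hI2 : (Complex.I)^2 = -1 := Complex.I_sq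
    push_cast at h1 ⊢
    push_cast at hne
    field_simp
    linear_combination Complex.I * h1 + ((t:ℂ) * a) * hI2
  rw [hB]
  rw [besselJ_eq, besselJ_eq]
  have haN : aN (ν + 1) = (2*ν+1) * aN ν := aN_succ hν0
  have hA1 : (ν + 1 - 1/2 : ℝ) = ν + 1/2 := by ring
  rw [hA1, haN]
  have haNne : (aN ν : ℝ) ≠ 0 := ne_of_gt (aN_pos hν0)
  have h2ν : (2*ν+1 : ℝ) ≠ 0 := by nlinarith
  have htν : t ^ (ν - 1) = t ^ ν / t := by
    rw [Real.rpow_sub ht, Real.rpow_one]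
  have htν1 : t ^ (ν + 1) = t ^ ν * t := by
    rw [Real.rpow_add ht, Real.rpow_one]
  rw [htν, htν1]
  set a0 := A (ν - 1/2) t with ha0def
  set a1 := A (ν + 1/2) t with ha1def
  set T := t ^ ν with hTdef
  have htne : (t:ℂ) ≠ 0 := by exact_mod_cast ne_of_gt ht
  have haNne' : ((aN ν : ℝ):ℂ) ≠ 0 := by exact_mod_cast haNne
  have h2ν' : ((2*ν+1 : ℝ):ℂ) ≠ 0 := by exact_mod_cast h2ν
  push_cast at h2ν' htne haNne' ⊢
  field_simp
  ring

/-- Trivial bound for `besselJ`. -/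
lemma norm_besselJ_le {ν : ℝ} (hν : 0 ≤ ν) {t : ℝ} (ht : 0 ≤ t) :
    ‖besselJ ν t‖ ≤ ((∫ s in (-1:ℝ)..1, w (ν - 1/2) s) / aN ν) * t ^ ν := by
  rw [besselJ_eq, norm_mul, Complex.norm_real, Real.norm_eq_abs]
  have haN : 0 < aN ν := aN_pos hν
  have htν : 0 ≤ t ^ ν := Real.rpow_nonneg ht ν
  rw [abs_of_nonneg (by positivity)]
  calc t ^ ν / aN ν * ‖A (ν - 1/2) t‖
      ≤ t ^ ν / aN ν * ∫ s in (-1:ℝ)..1, w (ν - 1/2) s := by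
        apply mul_le_mul_of_nonneg_left (norm_A_le (by linarith) t) (by positivity)
  _ = _ := by ring

/-- Recurrence: `J_{ν+1}(t) = (2ν/t) J_ν(t) - J_{ν-1}(t)` for `t > 0`, `ν ≥ 1`. -/
lemma besselJ_rec {ν : ℝ} (hν : 1 ≤ ν) {t : ℝ} (ht : 0 < t) :
    besselJ (ν+1) t = ((2*ν/t : ℝ):ℂ) * besselJ ν t - besselJ (ν-1) t := by
  have hν0 : (0:ℝ) ≤ ν := by linarith
  have hrec := A_rec hν t
  rw [besselJ_eq, besselJ_eq, besselJ_eq]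
  have hA1 : (ν + 1 - 1/2 : ℝ) = ν + 1/2 := by ring
  have hA2 : (ν - 1 - 1/2 : ℝ) = ν - 3/2 := by ring
  rw [hA1, hA2, aN_succ hν0]
  have haN1 : aN ν = (2*ν-1) * aN (ν-1) := by
    have := aN_succ (ν := ν - 1) (by linarith)
    rw [sub_add_cancel] at this
    rw [this]; ring_nf
  have haNm : (0:ℝ) < aN (ν-1) := aN_pos (by linarith)
  have haN : (0:ℝ) < aN ν := aN_pos hν0
  have h2ν1 : (2*ν+1 : ℝ) ≠ 0 := by nlinarith
  have h2ν2 : (2*ν-1 : ℝ) ≠ 0 := by nlinarith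
  have htν1 : t ^ (ν + 1) = t ^ ν * t := by rw [Real.rpow_add ht, Real.rpow_one]
  have htν2 : t ^ (ν - 1) = t ^ ν / t := by rw [Real.rpow_sub ht, Real.rpow_one]
  rw [htν1, htν2, haN1]
  set a0 := A (ν - 1/2) t with ha0def
  set a1 := A (ν + 1/2) t with ha1def
  set a2 := A (ν - 3/2) t with ha2def
  set T := t ^ ν with hTdef
  set N := aN (ν - 1) with hNdef
  have htne : (t:ℂ) ≠ 0 := by exact_mod_cast ne_of_gt ht
  have haNmne : ((N : ℝ):ℂ) ≠ 0 := by exact_mod_cast ne_of_gt haNm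
  have h2ν1' : ((2*ν+1 : ℝ):ℂ) ≠ 0 := by exact_mod_cast h2ν1
  have h2ν2' : ((2*ν-1 : ℝ):ℂ) ≠ 0 := by exact_mod_cast h2ν2
  push_cast at hrec htne haNmne h2ν1' h2ν2' ⊢
  field_simp
  linear_combination (T:ℂ) * hrec
lemma continuousOn_rpow_mul_besselJ (ν p : ℝ) (hν : -(1/2:ℝ) < ν) :
    ContinuousOn (fun t : ℝ => ((t ^ p : ℝ):ℂ) * besselJ ν t) (Set.Ioi (0:ℝ)) := by
  intro t ht
  apply ContinuousAt.continuousWithinAt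
  have h1 : ContinuousAt (fun t : ℝ => t ^ p) t :=
    Real.continuousAt_rpow_const _ _ (Or.inl (ne_of_gt ht))
  have h2 : ContinuousAt (fun t : ℝ => t ^ ν / aN ν) t :=
    (Real.continuousAt_rpow_const _ _ (Or.inl (ne_of_gt ht))).div_const _
  have h3 : ContinuousAt (besselJ ν) t := by
    have : ContinuousAt (fun t => ((t ^ ν / aN ν : ℝ):ℂ) * A (ν - 1/2) t) t :=
      (Complex.continuous_ofReal.continuousAt.comp h2).mul
        ((continuous_A (by linarith) ).continuousAt)
    exact this
  exact (Complex.continuous_ofReal.continuousAt.comp h1).mul h3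

lemma integrableOn_rpow_mul_besselJ {ν p y : ℝ} (hν : 0 ≤ ν) (hp : p + ν < -1) (hy : 0 < y) :
    IntegrableOn (fun t : ℝ => ((t ^ p : ℝ):ℂ) * besselJ ν t) (Set.Ioi y) := by
  set C : ℝ := (∫ s in (-1:ℝ)..1, w (ν - 1/2) s) / aN ν with hC
  apply Integrable.mono' (g := fun t => C * t ^ (p + ν))
  · exact (integrableOn_Ioi_rpow_of_lt hp hy).const_mul C
  · exact ((continuousOn_rpow_mul_besselJ ν p (by linarith)).mono
      (fun t (ht : t ∈ Set.Ioi y) => lt_trans hy ht)).aestronglyMeasurable measurableSet_Ioi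
  · rw [ae_restrict_iff' measurableSet_Ioi]
    filter_upwards with t ht
    have ht0 : (0:ℝ) < t := lt_trans hy ht
    rw [norm_mul, Complex.norm_real, Real.norm_eq_abs,
      abs_of_nonneg (Real.rpow_nonneg ht0.le _)]
    calc t ^ p * ‖besselJ ν t‖ ≤ t ^ p * (C * t ^ ν) := by
          apply mul_le_mul_of_nonneg_left (norm_besselJ_le hν ht0.le)
            (Real.rpow_nonneg ht0.le _)
    _ = C * t ^ (p + ν) := by rw [Real.rpow_add ht0]; ring

section Dlevel
variable {δ : ℝ}

def f1 (δ t : ℝ) : ℂ := ((t ^ (-δ - 1) : ℝ):ℂ) * besselJ (δ - 1) t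
def f2 (δ t : ℝ) : ℂ := ((t ^ (-δ) : ℝ):ℂ) * besselJ δ t
def Psi (δ t : ℝ) : ℂ := ((t ^ (-δ) : ℝ):ℂ) * besselJ (δ - 1) t

lemma int_f1 (hδ : 2 ≤ δ) {y : ℝ} (hy : 0 < y) : IntegrableOn (f1 δ) (Set.Ioi y) := by
  apply integrableOn_rpow_mul_besselJ (by linarith) (by linarith) hy

lemma int_g (hδ : 2 ≤ δ) {y : ℝ} (hy : 0 < y) :
    IntegrableOn (fun t => ((t ^ (-δ) : ℝ):ℂ) * besselJ (δ - 2) t) (Set.Ioi y) := by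
  apply integrableOn_rpow_mul_besselJ (by linarith) (by linarith) hy

lemma f2_eq (hδ : 2 ≤ δ) {t : ℝ} (ht : 0 < t) :
    f2 δ t = ((2*(δ-1) : ℝ):ℂ) * f1 δ t - ((t ^ (-δ) : ℝ):ℂ) * besselJ (δ - 2) t := by
  have hrec := besselJ_rec (ν := δ - 1) (by linarith) ht
  rw [sub_add_cancel] at hrec
  have h2 : (δ - 1 - 1 : ℝ) = δ - 2 := by ring
  rw [h2] at hrec
  unfold f2 f1
  rw [hrec]
  have hkey : (t ^ (-δ) : ℝ) * (2*(δ-1)/t) = 2*(δ-1) * t ^ (-δ - 1) := by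
    rw [Real.rpow_sub ht, Real.rpow_one]
    field_simp
  calc ((t ^ (-δ):ℝ):ℂ) * (((2*(δ-1)/t:ℝ):ℂ) * besselJ (δ-1) t - besselJ (δ-2) t)
      = ((t^(-δ) * (2*(δ-1)/t) : ℝ):ℂ) * besselJ (δ-1) t
        - ((t^(-δ):ℝ):ℂ) * besselJ (δ-2) t := by push_cast; ring
  _ = _ := by rw [hkey]; push_cast; ring

lemma int_f2 (hδ : 2 ≤ δ) {y : ℝ} (hy : 0 < y) : IntegrableOn (f2 δ) (Set.Ioi y) := by
  apply IntegrableOn.congr_fun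
    (((int_f1 hδ hy).const_mul (((2*(δ-1) : ℝ):ℂ))).sub (int_g hδ hy))
    (fun t ht => (f2_eq hδ (lt_trans hy ht)).symm) measurableSet_Ioi

lemma Psi_hasDerivAt (hδ : 2 ≤ δ) {t : ℝ} (ht : 0 < t) :
    HasDerivAt (Psi δ) (-(f1 δ t) - f2 δ t) t := by
  have hu : HasDerivAt (fun t : ℝ => t ^ (-δ)) (-δ * t ^ (-δ - 1)) t :=
    Real.hasDerivAt_rpow_const (Or.inl (ne_of_gt ht))
  have hJ := besselJ_hasDerivAt (ν := δ - 1) (by linarith) ht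
  rw [sub_add_cancel] at hJ
  have hprod := (hu.ofReal_comp).mul hJ
  have hfun : (fun t : ℝ => ((t ^ (-δ) : ℝ):ℂ) * besselJ (δ - 1) t) = Psi δ := rfl
  simp only [Pi.mul_def] at hprod
  rw [hfun] at hprod
  refine hprod.congr_deriv ?_
  unfold f1 f2
  have hQ : (t ^ (-δ - 1) : ℝ) = t ^ (-δ) / t := by
    rw [Real.rpow_sub ht, Real.rpow_one]
  have hR : ((δ - 1)/t : ℝ) * t ^ (-δ) = (δ-1) * (t ^ (-δ) / t) := by ring
  rw [hQ]
  have htne : (t:ℂ) ≠ 0 := by exact_mod_cast ne_of_gt ht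
  push_cast
  field_simp
  ring

lemma Psi_tendsto (hδ : 2 ≤ δ) : Tendsto (Psi δ) atTop (nhds 0) := by
  set C : ℝ := (∫ s in (-1:ℝ)..1, w (δ - 1 - 1/2) s) / aN (δ - 1) with hC
  have hg : Tendsto (fun t : ℝ => C * t ^ (-1 : ℝ)) atTop (nhds 0) := by
    have := (tendsto_rpow_neg_atTop (y := 1) one_pos).const_mul C
    simpa using this
  apply squeeze_zero_norm' _ hg
  · filter_upwards [eventually_gt_atTop (0:ℝ)] with t ht
    unfold Psi
    rw [norm_mul, Complex.norm_real, Real.norm_eq_abs,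
      abs_of_nonneg (Real.rpow_nonneg ht.le _)]
    calc t ^ (-δ) * ‖besselJ (δ - 1) t‖ ≤ t ^ (-δ) * (C * t ^ (δ - 1)) := by
          apply mul_le_mul_of_nonneg_left (norm_besselJ_le (by linarith) ht.le)
            (Real.rpow_nonneg ht.le _)
    _ = C * t ^ (-δ + (δ - 1)) := by rw [Real.rpow_add ht]; ring
    _ = C * t ^ (-1 : ℝ) := by rw [show (-δ + (δ - 1) : ℝ) = -1 by ring]

end Dlevel

section Dlevel2
variable {δ : ℝ}

lemma continuousOn_f1 (hδ : 2 ≤ δ) : ContinuousOn (f1 δ) (Set.Ioi (0:ℝ)) :=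
  continuousOn_rpow_mul_besselJ (δ - 1) (-δ - 1) (by linarith)

lemma keyE (hδ : 2 ≤ δ) {y : ℝ} (hy : 0 < y) :
    ∫ t in Set.Ioi y, f2 δ t
      = ((y ^ (-δ) : ℝ):ℂ) * besselJ (δ - 1) y - ∫ t in Set.Ioi y, f1 δ t := by
  have hderiv : ∀ t ∈ Set.Ici y, HasDerivAt (Psi δ) (-(f1 δ t) - f2 δ t) t :=
    fun t htt => Psi_hasDerivAt hδ (lt_of_lt_of_le hy htt)
  have h1 := int_f1 hδ hy
  have h2 := int_f2 hδ hy
  have hfint : IntegrableOn (fun t => -(f1 δ t) - f2 δ t) (Set.Ioi y) := h1.neg.sub h2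
  have hmain := MeasureTheory.integral_Ioi_of_hasDerivAt_of_tendsto' hderiv hfint (Psi_tendsto hδ)
  have hs : (∫ x in Set.Ioi y, (-(f1 δ x) - f2 δ x))
      = (∫ x in Set.Ioi y, -(f1 δ x)) - ∫ x in Set.Ioi y, f2 δ x :=
    MeasureTheory.integral_sub h1.neg h2
  have hn : (∫ x in Set.Ioi y, -(f1 δ x)) = -∫ x in Set.Ioi y, f1 δ x :=
    MeasureTheory.integral_neg _
  rw [hs, hn] at hmain
  have hPsiy : Psi δ y = ((y ^ (-δ) : ℝ):ℂ) * besselJ (δ - 1) y := rfl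
  rw [hPsiy] at hmain
  linear_combination -hmain

lemma Theta_hasDerivAt (hδ : 2 ≤ δ) {y : ℝ} (hy : 0 < y) :
    HasDerivAt (fun z => ∫ t in Set.Ioi z, f1 δ t) (-(f1 δ y)) y := by
  set a : ℝ := y/2 with hadef
  have ha : 0 < a := by positivity
  have haly : a < y := by rw [hadef]; linarith
  have hsplit : ∀ z ∈ Set.Ioi a,
      (∫ t in Set.Ioi z, f1 δ t) = (∫ t in Set.Ioi a, f1 δ t) - ∫ t in a..z, f1 δ t := by
    intro z hz
    have haz : a ≤ z := le_of_lt hz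
    rw [intervalIntegral.integral_of_le haz]
    have hu : (∫ t in Set.Ioi a, f1 δ t)
        = (∫ t in Set.Ioc a z, f1 δ t) + ∫ t in Set.Ioi z, f1 δ t := by
      rw [← MeasureTheory.setIntegral_union (Set.Ioc_disjoint_Ioi le_rfl) measurableSet_Ioi
        ((int_f1 hδ ha).mono_set Set.Ioc_subset_Ioi_self)
        ((int_f1 hδ (lt_of_lt_of_le ha haz)))]
      rw [Set.Ioc_union_Ioi_eq_Ioi haz]
    rw [hu]; ring
  have hii : IntervalIntegrable (f1 δ) volume a y := by
    rw [intervalIntegrable_iff_integrableOn_Ioc_of_le (le_of_lt haly)]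
    exact (int_f1 hδ ha).mono_set Set.Ioc_subset_Ioi_self
  have hmeas : StronglyMeasurableAtFilter (f1 δ) (nhds y) volume :=
    (continuousOn_f1 hδ).stronglyMeasurableAtFilter isOpen_Ioi y hy
  have hcont : ContinuousAt (f1 δ) y :=
    (continuousOn_f1 hδ).continuousAt (Ioi_mem_nhds hy)
  have hFTC : HasDerivAt (fun z => ∫ t in a..z, f1 δ t) (f1 δ y) y :=
    intervalIntegral.integral_hasDerivAt_right hii hmeas hcont
  have hconst := hFTC.const_sub (∫ t in Set.Ioi a, f1 δ t)
  apply hconst.congr_of_eventuallyEq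
  filter_upwards [Ioi_mem_nhds haly] with z hz
  exact hsplit z hz

end Dlevel2
end BJaux

section Main
open BJaux

lemma hFun_eq (d : ℕ) (hd : 4 ≤ d) {x : ℝ} (hx : 0 < x) :
    hFun d x = ((rieszConst d * (2 * π) ^ ((d:ℝ)/2 + 1) * x : ℝ):ℂ)
      * ∫ t in Set.Ioi (2 * π * x), f1 ((d:ℝ)/2) t := by
  unfold hFun
  set δ : ℝ := (d:ℝ)/2 with hδdef
  have hδ : 2 ≤ δ := by
    have : (4:ℝ) ≤ (d:ℝ) := by exact_mod_cast hd
    rw [hδdef]; linarith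
  set c : ℝ := 2 * π * x with hcdef
  have hc : 0 < c := by rw [hcdef]; positivity
  have hR : (∫ r in Set.Ioi (1:ℝ), ((r ^ (-(d:ℝ)/2 - 1) : ℝ):ℂ) * besselJ (δ - 1) (2 * π * r * x))
      = ((c ^ (δ + 1) : ℝ):ℂ) * ∫ r in Set.Ioi (1:ℝ), f1 δ (c * r) := by
    rw [← MeasureTheory.integral_const_mul]
    apply MeasureTheory.setIntegral_congr_fun measurableSet_Ioi
    intro r hr
    have hr0 : (0:ℝ) < r := lt_trans one_pos hr
    have harg : 2 * π * r * x = c * r := by rw [hcdef]; ring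
    show ((r ^ (-(d:ℝ)/2 - 1) : ℝ):ℂ) * besselJ (δ - 1) (2 * π * r * x)
      = ((c ^ (δ + 1) : ℝ):ℂ) * f1 δ (c * r)
    rw [harg]
    show ((r ^ (-(d:ℝ)/2 - 1) : ℝ):ℂ) * besselJ (δ - 1) (c*r)
      = ((c ^ (δ + 1) : ℝ):ℂ) * ((((c*r) ^ (-δ - 1) : ℝ):ℂ) * besselJ (δ - 1) (c*r))
    have hreal : c ^ (δ+1) * ((c*r) ^ (-δ-1)) = r ^ (-δ-1) := by
      rw [Real.mul_rpow hc.le hr0.le, ← mul_assoc, ← Real.rpow_add hc]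
      norm_num
    have hexp : (-(d:ℝ)/2 - 1 : ℝ) = -δ - 1 := by rw [hδdef]; ring
    rw [hexp, ← hreal]
    push_cast
    ring
  rw [hR]
  have hsub := MeasureTheory.integral_comp_mul_left_Ioi (f1 δ) 1 hc
  rw [mul_one] at hsub
  rw [hsub, Complex.real_smul]
  have hconst : 2 * π * rieszConst d * x ^ (1 - δ) * (c ^ (δ+1) * c⁻¹)
      = rieszConst d * (2*π) ^ (δ + 1) * x := by
    have h1 : c ^ (δ+1) * c⁻¹ = c ^ δ := by
      rw [Real.rpow_add_one (ne_of_gt hc)]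
      field_simp
    rw [h1, hcdef, Real.mul_rpow (by positivity) hx.le]
    have h2 : x ^ (1 - δ) * x ^ δ = x := by
      rw [← Real.rpow_add hx]
      norm_num
    have h3 : 2 * π * (2*π) ^ δ = (2*π) ^ (δ + 1) := by
      rw [Real.rpow_add_one (by positivity : (2*π : ℝ) ≠ 0)]
      ring
    calc 2 * π * rieszConst d * x ^ (1-δ) * ((2*π) ^ δ * x ^ δ)
        = rieszConst d * (2 * π * (2*π) ^ δ) * (x ^ (1-δ) * x ^ δ) := by ring
    _ = _ := by rw [h2, h3]
  calc ((2 * π * rieszConst d * x ^ (1 - δ) : ℝ):ℂ)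
        * (((c ^ (δ+1) : ℝ):ℂ) * (((c⁻¹ : ℝ):ℂ) * ∫ t in Set.Ioi c, f1 δ t))
      = ((2 * π * rieszConst d * x ^ (1 - δ) * (c ^ (δ+1) * c⁻¹) : ℝ):ℂ)
        * ∫ t in Set.Ioi c, f1 δ t := by push_cast; ring
  _ = _ := by rw [hconst]


/-- Let `d ≥ 4`. The function `h` is differentiable on `(0,∞)` with
`h′(x) = −c_d (2π)^{d/2+1} ∫_{2πx}^∞ r^{−d/2} J_{d/2}(r) dr` for all `x > 0`. -/
theorem hFun_hasDerivAt (d : ℕ) (hd : 4 ≤ d) (x : ℝ) (hx : 0 < x) :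
    HasDerivAt (hFun d)
      (((-(rieszConst d) * (2 * π) ^ ((d : ℝ) / 2 + 1) : ℝ) : ℂ) *
        ∫ r in Set.Ioi (2 * π * x), ((r ^ (-(d : ℝ) / 2) : ℝ) : ℂ) * besselJ ((d : ℝ) / 2) r)
      x := by
  set δ : ℝ := (d:ℝ)/2 with hδdef
  have hδ : 2 ≤ δ := by
    have : (4:ℝ) ≤ (d:ℝ) := by exact_mod_cast hd
    rw [hδdef]; linarith
  set y : ℝ := 2 * π * x with hydef
  have hy : 0 < y := by rw [hydef]; positivity
  set K : ℝ := rieszConst d * (2 * π) ^ (δ + 1) with hKdef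
  -- the integrand of the target is f2 δ
  have htarget : (∫ r in Set.Ioi y, ((r ^ (-(d:ℝ)/2) : ℝ):ℂ) * besselJ δ r)
      = ∫ t in Set.Ioi y, f2 δ t := by
    apply MeasureTheory.setIntegral_congr_fun measurableSet_Ioi
    intro r _
    show ((r ^ (-(d:ℝ)/2) : ℝ):ℂ) * besselJ δ r = ((r ^ (-δ) : ℝ):ℂ) * besselJ δ r
    rw [show (-(d:ℝ)/2 : ℝ) = -δ by rw [hδdef]; ring]
  -- derivative of the model function
  have hT := Theta_hasDerivAt hδ hy
  have hlin : HasDerivAt (fun x : ℝ => 2 * π * x) (2 * π) x := by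
    simpa using (hasDerivAt_id x).const_mul (2 * π)
  have hcomp : HasDerivAt (fun x : ℝ => ∫ t in Set.Ioi (2 * π * x), f1 δ t)
      ((2 * π) • (-(f1 δ y))) x := by
    have := hT.scomp x hlin
    exact this
  have hu : HasDerivAt (fun x : ℝ => ((K * x : ℝ):ℂ)) ((K : ℝ):ℂ) x := by
    have h0 : HasDerivAt (fun x : ℝ => K * x) K x := by
      simpa using (hasDerivAt_id x).const_mul K
    exact h0.ofReal_comp
  have hmul := hu.mul hcomp
  rw [show (2*π*x : ℝ) = y from hydef.symm] at hmul
  -- transfer along hFun_eq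
  have hEq : hFun d =ᶠ[nhds x] fun x : ℝ =>
      ((K * x : ℝ):ℂ) * ∫ t in Set.Ioi (2 * π * x), f1 δ t := by
    filter_upwards [Ioi_mem_nhds hx] with z hz
    exact hFun_eq d hd hz
  have hderiv : HasDerivAt (hFun d)
      ((((K : ℝ):ℂ) * ∫ t in Set.Ioi y, f1 δ t)
        + ((K * x : ℝ):ℂ) * ((2 * π) • (-(f1 δ y)))) x := by
    apply HasDerivAt.congr_of_eventuallyEq hmul hEq
  convert hderiv using 1
  rw [htarget, keyE hδ hy, Complex.real_smul, hKdef]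
  have hf1y : f1 δ y = ((y ^ (-δ - 1) : ℝ):ℂ) * besselJ (δ - 1) y := rfl
  rw [hf1y]
  have h1 : (y:ℝ) ^ (-δ - 1) = y ^ (-δ) / y := by rw [Real.rpow_sub hy, Real.rpow_one]
  rw [h1]
  have hyne : (y:ℂ) ≠ 0 := by exact_mod_cast ne_of_gt hy
  have hyx : (y:ℂ) = 2 * π * (x:ℂ) := by
    have := congrArg (Complex.ofReal) hydef
    push_cast at this
    exact this
  push_cast
  field_simp
  linear_combination (-((rieszConst d : ℂ)
    * ((y ^ (-δ) : ℝ):ℂ) * besselJ (δ - 1) y)) * hyx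

end Main
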